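/- arXiv:2402.08357 — 2 statements merged into one kernel-verified Lean document; each statement's English description precedes it below -/
import Mathlib

section
/- Let p be a prime, let F be a finite field of characteristic p, let S = SL₂(F), and let H be a Sylow p-subgroup of S. Then for all pairwise distinct conjugates H₁, H₂, H₃ of H in S, the intersection of H₁ with the set product H₂H₃ = {h₂h₃ : h₂ ∈ H₂, h₃ ∈ H₃} is {1}. -/
/-- `I` and `J` are `r`-related under the action of `G`. -/
def Related (G : Type*) {Ω : Type*} [Group G] [MulAction G Ω] {n : ℕ} (r : ℕ)
    (I J : Fin n → Ω) : Prop :=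
  ∀ k : Fin r → Fin n, StrictMono k → ∃ g : G, ∀ i, g • I (k i) = J (k i)

/-- The action of `G` on `Ω` is binary. -/
def IsBinary (G Ω : Type*) [Group G] [MulAction G Ω] : Prop :=
  ∀ n : ℕ, 2 ≤ n → ∀ I J : Fin n → Ω, Related G 2 I J → Related G n I J

/-- The graph `Γ(D)` associated to a subset `D` of a group. -/
def classGraph {G : Type*} [Group G] (D : Set G) : SimpleGraph G where
  Adj g h := g ≠ h ∧ g ∈ D ∧ h ∈ D ∧ Commute g h ∧ (g * h⁻¹ ∈ D ∨ h * g⁻¹ ∈ D)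
  symm := ⟨by
    rintro g h ⟨hne, hg, hh, hc, hd⟩
    exact ⟨hne.symm, hh, hg, hc.symm, hd.symm⟩⟩
  loopless := ⟨by rintro g ⟨hne, -⟩; exact hne rfl⟩

/-- `Δ(g, D)`: the subgroup generated by the vertices in the connected component
of `Γ(D)` containing `g`. -/
def Delta {G : Type*} [Group G] (g : G) (D : Set G) : Subgroup G :=
  Subgroup.closure {h | h ∈ D ∧ (classGraph D).Reachable g h}

/-- The component group `Δ(g)` of `g` : here `D` is the conjugacy class of `g`. -/
def DeltaC {G : Type*} [Group G] (g : G) : Subgroup G :=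
  Delta g {x | IsConj g x}

/-- `D` is a union of conjugacy classes. -/
def IsUnionConjClasses {G : Type*} [Group G] (D : Set G) : Prop :=
  ∀ x ∈ D, ∀ y : G, IsConj x y → y ∈ D

/-- The fixity of `g` acting on `Ω`: the number of fixed points of `g`. -/
noncomputable def fixity (G Ω : Type*) [Group G] [MulAction G Ω] (g : G) : ℕ :=
  Nat.card (MulAction.fixedBy Ω g)

/-- `g` is an element of order `p` of maximal `p`-fixity. -/
def MaxPFixity (G Ω : Type*) [Group G] [MulAction G Ω] (p : ℕ) (g : G) : Prop :=
  orderOf g = p ∧ ∀ h : G, orderOf h = p → fixity G Ω h ≤ fixity G Ω g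

/-- The ascending sequence of unions of conjugacy classes `D_1 = D`,
`D_{i+1}` = union of the conjugacy classes of elements of order `p`
meeting `Δ(g, D_i)`. -/
def DSeq {G : Type*} [Group G] (g : G) (D : Set G) (p : ℕ) : ℕ → Set G
  | 0 => D
  | i + 1 => {x : G | orderOf x = p ∧ ∃ y ∈ Delta g (DSeq g D p i), IsConj x y}

/-- `Δ_∞(g, D)`: the union of the chain `Δ(g, D_1) ≤ Δ(g, D_2) ≤ ⋯`. -/
def DeltaInf {G : Type*} [Group G] (g : G) (D : Set G) (p : ℕ) : Subgroup G :=
  ⨆ i : ℕ, Delta g (DSeq g D p i)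

/-- The terminal component group `Δ_∞(g)` of an element `g` of order `p`. -/
def DeltaInfC {G : Type*} [Group G] (g : G) (p : ℕ) : Subgroup G :=
  DeltaInf g {x | IsConj g x} p

/-!
The conjugates of a Sylow `p`-subgroup of `SL₂(F)` are the groups `T(L)` of transvections with
axis a line `L ⊆ F²`: the elements fixing `L` pointwise and moving every vector within `L`.
Indeed `T(L)` is a `p`-group, as `gⁿ u = u + n (g u - u)` for `g ∈ T(L)`, and it is Sylow
because every `p`-element of `SL₂(F)` has trace `2`: if `x` lies in a `p`-group containing
`T(F e₀)`, comparing the traces of `x` and `x t` for the elementary transvection `t` shows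
that `x` is upper unitriangular.

Conjugation moves the axis, so distinct conjugates have distinct axes `L₁, L₂, L₃`. If
`x = y z` with `x ∈ T(L₁)`, `y ∈ T(L₂)`, `z ∈ T(L₃)`, then for `w ∈ L₃` the vector
`x w - w = y w - w` lies in `L₁ ∩ L₂ = 0`. Hence `x` fixes `L₁ + L₃ = F²` pointwise, and `x = 1`.
-/

open Module Pointwise MatrixGroups

section Transvection

variable {K V : Type*} (G : Type*) [Ring K] [AddCommGroup V] [Module K V] [Group G]
  [DistribMulAction G V]

def transvectionSubgroup (L : Submodule K V) : Subgroup G where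
  carrier := {g | (∀ w ∈ L, g • w = w) ∧ ∀ u, g • u - u ∈ L}
  mul_mem' := by
    rintro g h ⟨hgL, hg⟩ ⟨hhL, hh⟩
    refine ⟨fun w hw => by rw [mul_smul, hhL w hw, hgL w hw], fun u => ?_⟩
    have : (g * h) • u - u = g • (h • u - u) + (g • u - u) := by
      rw [smul_sub, mul_smul]; abel
    rw [this, hgL _ (hh u)]
    exact L.add_mem (hh u) (hg u)
  one_mem' := ⟨fun w _ => one_smul G w, fun u => by simp⟩
  inv_mem' := by
    rintro g ⟨hgL, hg⟩
    refine ⟨fun w hw => by rw [inv_smul_eq_iff, hgL w hw], fun u => ?_⟩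
    have := L.neg_mem (hg (g⁻¹ • u))
    rwa [smul_inv_smul, neg_sub] at this

variable {G}

theorem mem_transvectionSubgroup {L : Submodule K V} {g : G} :
    g ∈ transvectionSubgroup G L ↔ (∀ w ∈ L, g • w = w) ∧ ∀ u, g • u - u ∈ L :=
  Iff.rfl

theorem pow_smul_of_mem_transvectionSubgroup {L : Submodule K V} {g : G}
    (hg : g ∈ transvectionSubgroup G L) (n : ℕ) (u : V) :
    g ^ n • u = u + n • (g • u - u) := by
  induction n with
  | zero => simp
  | succ n ih =>
    calc g ^ (n + 1) • u = g ^ n • (u + (g • u - u)) := by rw [pow_succ, mul_smul, add_sub_cancel]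
      _ = u + (n + 1) • (g • u - u) := by
        rw [smul_add, ih, (pow_mem hg n).1 _ (hg.2 u), succ_nsmul, add_assoc]

theorem isPGroup_transvectionSubgroup (p : ℕ) [CharP K p] [FaithfulSMul G V]
    (L : Submodule K V) : IsPGroup p (transvectionSubgroup G L) := by
  rintro ⟨g, hg⟩
  refine ⟨1, Subtype.ext (eq_of_smul_eq_smul (α := V) fun u => ?_)⟩
  rw [pow_one, Subgroup.coe_pow, pow_smul_of_mem_transvectionSubgroup hg,
    ← Nat.cast_smul_eq_nsmul K, CharP.cast_eq_zero, zero_smul, add_zero, Subgroup.coe_one,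
    one_smul]

theorem map_conj_transvectionSubgroup [SMulCommClass G K V] (g : G) (L : Submodule K V) :
    (transvectionSubgroup G L).map (MulAut.conj g).toMonoidHom =
      transvectionSubgroup G (g • L) := by
  ext x
  have hmem : ∀ v, v ∈ g • L ↔ g⁻¹ • v ∈ L := fun v => by
    rw [← SetLike.mem_coe, Submodule.coe_pointwise_smul, Set.mem_smul_set_iff_inv_smul_mem,
      SetLike.mem_coe]
  simp only [Subgroup.mem_map_equiv, MulAut.conj_symm_apply, mem_transvectionSubgroup, hmem,
    mul_smul, smul_sub, inv_smul_eq_iff]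
  constructor
  · rintro ⟨hfix, hmove⟩
    exact ⟨fun w hw => by simpa using hfix _ hw, fun u => by simpa using hmove (g⁻¹ • u)⟩
  · rintro ⟨hfix, hmove⟩
    exact ⟨fun w hw => by simpa using hfix (g • w) (by simpa using hw),
      fun u => by simpa using hmove (g • u)⟩

theorem eq_one_of_mul_eq_of_mem_transvectionSubgroup [FaithfulSMul G V]
    {L₁ L₂ L₃ : Submodule K V} (h₁₂ : Disjoint L₁ L₂) (h₁₃ : L₁ ⊔ L₃ = ⊤) {x y z : G}
    (hx : x ∈ transvectionSubgroup G L₁) (hy : y ∈ transvectionSubgroup G L₂)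
    (hz : z ∈ transvectionSubgroup G L₃) (hxyz : y * z = x) : x = 1 := by
  have hfix₃ : ∀ w ∈ L₃, x • w = w := by
    intro w hw
    have h₂ : x • w - w ∈ L₂ := by rw [← hxyz, mul_smul, hz.1 w hw]; exact hy.2 w
    exact sub_eq_zero.mp (Submodule.disjoint_def.mp h₁₂ _ (hx.2 w) h₂)
  refine eq_of_smul_eq_smul (α := V) fun u => ?_
  obtain ⟨w₁, hw₁, w₃, hw₃, rfl⟩ := Submodule.mem_sup.mp (h₁₃ ▸ Submodule.mem_top : u ∈ L₁ ⊔ L₃)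
  rw [smul_add, hx.1 w₁ hw₁, hfix₃ w₃ hw₃, one_smul]

end Transvection

section Lines

variable {K V G : Type*} [DivisionRing K] [AddCommGroup V] [Module K V]

theorem Submodule.isAtom_smul [Group G] [DistribMulAction G V] [SMulCommClass G K V]
    {L : Submodule K V} (hL : IsAtom L) (g : G) : IsAtom (g • L) := by
  rw [Submodule.isAtom_iff_finrank_eq_one] at hL ⊢
  rw [← hL]
  exact LinearEquiv.finrank_map_eq (DistribMulAction.toLinearEquiv K V g) L

theorem Submodule.sup_eq_top_of_isAtom (hV : finrank K V = 2) {L₁ L₂ : Submodule K V}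
    (h₁ : IsAtom L₁) (h₂ : IsAtom L₂) (hne : L₁ ≠ L₂) : L₁ ⊔ L₂ = ⊤ := by
  have : FiniteDimensional K V := .of_finrank_eq_succ hV
  apply Submodule.eq_top_of_finrank_eq
  have := Submodule.finrank_sup_add_finrank_inf_eq L₁ L₂
  rw [(h₁.disjoint_of_ne h₂ hne).eq_bot, finrank_bot, Submodule.isAtom_iff_finrank_eq_one.mp h₁,
    Submodule.isAtom_iff_finrank_eq_one.mp h₂] at this
  omega

theorem transvectionSubgroup_inter_mul_eq_singleton_one [Group G] [DistribMulAction G V]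
    [FaithfulSMul G V] (hV : finrank K V = 2) {L₁ L₂ L₃ : Submodule K V} (h₁ : IsAtom L₁)
    (h₂ : IsAtom L₂) (h₃ : IsAtom L₃) (h₁₂ : L₁ ≠ L₂) (h₁₃ : L₁ ≠ L₃) :
    (transvectionSubgroup G L₁ : Set G) ∩
      (transvectionSubgroup G L₂ * transvectionSubgroup G L₃ : Set G) = {1} := by
  refine Set.Subset.antisymm ?_ (Set.singleton_subset_iff.mpr ?_)
  · rintro x ⟨hx, y, hy, z, hz, hyz⟩
    exact eq_one_of_mul_eq_of_mem_transvectionSubgroup (h₁.disjoint_of_ne h₂ h₁₂)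
      (Submodule.sup_eq_top_of_isAtom hV h₁ h₃ h₁₃) hx hy hz hyz
  · exact ⟨Subgroup.one_mem _, 1, Subgroup.one_mem _, 1, Subgroup.one_mem _, mul_one 1⟩

end Lines

theorem Matrix.trace_eq_card_of_pow_char_pow_eq_one {n K : Type*} [Fintype n] [DecidableEq n]
    [CommRing K] [IsReduced K] (p : ℕ) [Fact p.Prime] [CharP K p] {M : Matrix n n K} {k : ℕ}
    (hM : M ^ p ^ k = 1) : M.trace = Fintype.card n := by
  cases isEmpty_or_nonempty n
  · simp
  have hnil : IsNilpotent (M - 1) :=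
    ⟨p ^ k, by rw [sub_pow_char_pow_of_commute _ _ (Commute.one_right M), hM, one_pow, sub_self]⟩
  have := (Matrix.isNilpotent_trace_of_isNilpotent hnil).eq_zero
  rwa [Matrix.trace_sub, Matrix.trace_one, sub_eq_zero] at this

namespace Matrix.SpecialLinearGroup

instance {ι R : Type*} [Fintype ι] [DecidableEq ι] [CommRing R] :
    FaithfulSMul (SpecialLinearGroup ι R) (ι → R) :=
  ⟨fun h => Subtype.ext (Matrix.toLin'.injective (LinearMap.ext h))⟩

variable {F : Type*} [Field F]

theorem mem_transvectionSubgroup_span_single_zero {g : SL(2, F)}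
    (h₀₀ : g 0 0 = 1) (h₁₀ : g 1 0 = 0) (h₁₁ : g 1 1 = 1) :
    g ∈ transvectionSubgroup SL(2, F) (F ∙ (Pi.single 0 1 : Fin 2 → F)) := by
  have hfix : g • (Pi.single 0 1 : Fin 2 → F) = Pi.single 0 1 := by
    ext i; fin_cases i <;> simp [SpecialLinearGroup.smul_def, h₀₀, h₁₀]
  refine ⟨fun w hw => ?_, fun u => Submodule.mem_span_singleton.mpr ⟨g 0 1 * u 1, ?_⟩⟩
  · obtain ⟨a, rfl⟩ := Submodule.mem_span_singleton.mp hw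
    rw [smul_comm, hfix]
  · ext i; fin_cases i <;> simp [SpecialLinearGroup.smul_def, h₀₀, h₁₀, h₁₁]

theorem le_transvectionSubgroup_of_isPGroup (p : ℕ) [Fact p.Prime] [CharP F p]
    {Q : Subgroup SL(2, F)} (hQ : IsPGroup p Q)
    (hle : transvectionSubgroup SL(2, F) (F ∙ (Pi.single 0 1 : Fin 2 → F)) ≤ Q) :
    Q ≤ transvectionSubgroup SL(2, F) (F ∙ (Pi.single 0 1 : Fin 2 → F)) := by
  have htrace : ∀ y ∈ Q, y 0 0 + y 1 1 = 2 := by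
    intro y hy
    obtain ⟨k, hk⟩ := hQ ⟨y, hy⟩
    have hyk : (y : Matrix (Fin 2) (Fin 2) F) ^ p ^ k = 1 := by
      rw [← coe_pow]; exact congrArg (fun z : Q => ((z : SL(2, F)) : Matrix (Fin 2) (Fin 2) F)) hk
    simpa [trace_fin_two, one_add_one_eq_two] using trace_eq_card_of_pow_char_pow_eq_one p hyk
  intro x hx
  have ht : transvection (zero_ne_one' (Fin 2)) (1 : F) ∈ Q :=
    hle (mem_transvectionSubgroup_span_single_zero (by simp [transvection_coe])
      (by simp [transvection_coe]) (by simp [transvection_coe]))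
  have h₁ := htrace x hx
  have h₂ : x 0 0 + (x 1 0 + x 1 1) = 2 := by
    simpa [transvection_coe, mul_apply, Fin.sum_univ_two] using htrace _ (Q.mul_mem hx ht)
  have hdet : x 0 0 * x 1 1 - x 0 1 * x 1 0 = 1 := by rw [← det_fin_two]; exact x.2
  have h₁₀ : x 1 0 = 0 := by linear_combination h₂ - h₁
  have h₀₀ : x 0 0 = 1 := by
    have : (x 0 0 - 1) ^ 2 = 0 := by linear_combination x 0 0 * h₁ - hdet - x 0 1 * h₁₀
    linear_combination pow_eq_zero_iff two_ne_zero |>.mp this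
  exact mem_transvectionSubgroup_span_single_zero h₀₀ h₁₀ (by linear_combination h₁ - h₀₀)

variable (F) in
def transvectionSylow (p : ℕ) [Fact p.Prime] [CharP F p] : Sylow p SL(2, F) where
  toSubgroup := transvectionSubgroup SL(2, F) (F ∙ (Pi.single 0 1 : Fin 2 → F))
  isPGroup' := isPGroup_transvectionSubgroup p _
  is_maximal' hQ hle := le_antisymm (le_transvectionSubgroup_of_isPGroup p hQ hle) hle

end Matrix.SpecialLinearGroup

open Pointwise in
theorem stmt15_general (p : ℕ) (hp : p.Prime) (F : Type*) [Field F] [Fintype F]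
    (hchar : CharP F p)
    (H : Sylow p (Matrix.SpecialLinearGroup (Fin 2) F))
    (g₁ g₂ g₃ : Matrix.SpecialLinearGroup (Fin 2) F)
    (H₁ H₂ H₃ : Subgroup (Matrix.SpecialLinearGroup (Fin 2) F))
    (hH₁ : H₁ = (H : Subgroup _).map (MulAut.conj g₁).toMonoidHom)
    (hH₂ : H₂ = (H : Subgroup _).map (MulAut.conj g₂).toMonoidHom)
    (hH₃ : H₃ = (H : Subgroup _).map (MulAut.conj g₃).toMonoidHom)
    (h12 : H₁ ≠ H₂) (h13 : H₁ ≠ H₃) :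
    (H₁ : Set (Matrix.SpecialLinearGroup (Fin 2) F))
      ∩ ((H₂ : Set (Matrix.SpecialLinearGroup (Fin 2) F))
          * (H₃ : Set (Matrix.SpecialLinearGroup (Fin 2) F))) = {1} := by
  have := Fact.mk hp
  set L₀ : Submodule F (Fin 2 → F) := F ∙ Pi.single 0 1
  obtain ⟨g, rfl⟩ := MulAction.exists_smul_eq SL(2, F)
    (Matrix.SpecialLinearGroup.transvectionSylow F p) H
  have hconj (k : SL(2, F)) : ((g • Matrix.SpecialLinearGroup.transvectionSylow F p :
      Sylow p SL(2, F)) : Subgroup SL(2, F)).map (MulAut.conj k).toMonoidHom =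
      transvectionSubgroup SL(2, F) ((k * g) • L₀) := by
    rw [mul_smul, ← map_conj_transvectionSubgroup, ← map_conj_transvectionSubgroup]
    rfl
  have hline (k : SL(2, F)) : IsAtom ((k * g) • L₀) :=
    Submodule.isAtom_smul (Submodule.isAtom_iff_finrank_eq_one.mpr
      (finrank_span_singleton (Pi.single_ne_zero_iff.mpr one_ne_zero))) _
  subst hH₁ hH₂ hH₃
  simp only [hconj] at h12 h13 ⊢
  exact transvectionSubgroup_inter_mul_eq_singleton_one (finrank_fin_fun F) (hline g₁) (hline g₂)
    (hline g₃) (ne_of_apply_ne _ h12) (ne_of_apply_ne _ h13)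

open Pointwise in
theorem stmt15 (p : ℕ) (hp : p.Prime) (F : Type*) [Field F] [Fintype F] [DecidableEq F]
    (hchar : CharP F p)
    (H : Sylow p (Matrix.SpecialLinearGroup (Fin 2) F))
    (g₁ g₂ g₃ : Matrix.SpecialLinearGroup (Fin 2) F)
    (H₁ H₂ H₃ : Subgroup (Matrix.SpecialLinearGroup (Fin 2) F))
    (hH₁ : H₁ = (H : Subgroup _).map (MulAut.conj g₁).toMonoidHom)
    (hH₂ : H₂ = (H : Subgroup _).map (MulAut.conj g₂).toMonoidHom)
    (hH₃ : H₃ = (H : Subgroup _).map (MulAut.conj g₃).toMonoidHom)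
    (h12 : H₁ ≠ H₂) (h13 : H₁ ≠ H₃) (h23 : H₂ ≠ H₃) :
    (H₁ : Set (Matrix.SpecialLinearGroup (Fin 2) F))
      ∩ ((H₂ : Set (Matrix.SpecialLinearGroup (Fin 2) F))
          * (H₃ : Set (Matrix.SpecialLinearGroup (Fin 2) F))) = {1} :=
  stmt15_general p hp F hchar H g₁ g₂ g₃ H₁ H₂ H₃ hH₁ hH₂ hH₃ h12 h13
end

section
/- Let G be a finite group and let H be a TI-subgroup of G, and let Ω be the set of right cosets of H in G with G acting by right multiplication. Then the action of G on Ω is binary if and only if for every three pairwise distinct conjugates H₁, H₂, H₃ of H in G, the intersection of H₁ with the set product H₂H₃ = {h₂h₃ : h₂ ∈ H₂, h₃ ∈ H₃} is {1}. -/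
/-! The point stabilizers of `G ⧸ H` are the conjugates of `H`, and the TI property makes
distinct ones meet trivially. A `2`-relation between tuples is extended one coordinate at a
time: if `g₁` fixes `ω₁`, `g₂` fixes `ω₂`, both send `α` to `β`, and `ω₁`, `ω₂` have different
stabilizers, then `g₁ g₂⁻¹ ∈ Stab β ∩ Stab ω₁ Stab ω₂`, so either `Stab β` is one of the other
two or `g₁ = g₂ ∈ Stab ω₁ ∩ Stab ω₂ = 1`; either way `α = β`. Conversely, `x = yz` in
`H₁ ∩ H₂H₃` yields `2`-related triples whose `3`-relation forces `y = z = 1`. -/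

open MulAction Pointwise

section TI

variable {G : Type*} [Group G] {H : Subgroup G}

lemma Subgroup.map_conj_map_conj (a b : G) :
    (H.map (MulAut.conj a).toMonoidHom).map (MulAut.conj b).toMonoidHom =
      H.map (MulAut.conj (b * a)).toMonoidHom := by
  rw [Subgroup.map_map, map_mul]
  rfl

lemma Subgroup.map_conj_one : H.map (MulAut.conj (1 : G)).toMonoidHom = H := by
  rw [map_one]
  exact Subgroup.map_id H

lemma Subgroup.inf_map_conj_eq_bot_of_ne
    (hTI : ∀ g : G, H ⊓ H.map (MulAut.conj g).toMonoidHom = H ∨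
      H ⊓ H.map (MulAut.conj g).toMonoidHom = ⊥)
    {g : G} (hne : H ≠ H.map (MulAut.conj g).toMonoidHom) :
    H ⊓ H.map (MulAut.conj g).toMonoidHom = ⊥ := by
  rcases hTI g with hle | hbot
  -- `H ≤ gHg⁻¹`: the alternative for `g⁻¹` gives `gHg⁻¹ ≤ H`, or the claim after conjugating by `g`.
  · rcases hTI g⁻¹ with hle' | hbot'
    · refine absurd (le_antisymm (inf_eq_left.mp hle) ?_) hne
      have := Subgroup.map_mono (f := (MulAut.conj g).toMonoidHom) (inf_eq_left.mp hle')
      rwa [Subgroup.map_conj_map_conj, mul_inv_cancel, Subgroup.map_conj_one] at this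
    · have := congrArg (Subgroup.map (MulAut.conj g).toMonoidHom) hbot'
      rwa [Subgroup.map_inf _ _ _ (MulAut.conj g).injective, Subgroup.map_conj_map_conj,
        mul_inv_cancel, Subgroup.map_conj_one, Subgroup.map_bot, inf_comm] at this
  · exact hbot

lemma Subgroup.map_conj_inf_map_conj_eq_bot
    (hTI : ∀ g : G, H ⊓ H.map (MulAut.conj g).toMonoidHom = H ∨
      H ⊓ H.map (MulAut.conj g).toMonoidHom = ⊥)
    {a b : G} (hne : H.map (MulAut.conj a).toMonoidHom ≠ H.map (MulAut.conj b).toMonoidHom) :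
    H.map (MulAut.conj a).toMonoidHom ⊓ H.map (MulAut.conj b).toMonoidHom = ⊥ := by
  have hb : H.map (MulAut.conj b).toMonoidHom =
      (H.map (MulAut.conj (a⁻¹ * b)).toMonoidHom).map (MulAut.conj a).toMonoidHom := by
    rw [Subgroup.map_conj_map_conj, mul_inv_cancel_left]
  rw [hb, ← Subgroup.map_inf _ _ _ (MulAut.conj a).injective,
    Subgroup.inf_map_conj_eq_bot_of_ne hTI fun h => hne (by rw [hb, ← h]), Subgroup.map_bot]

end TI

section Action

variable {G Ω : Type*} [Group G] [MulAction G Ω]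

lemma related_two_iff {n : ℕ} {I J : Fin n → Ω} :
    Related G 2 I J ↔ ∀ i j, i < j → ∃ g : G, g • I i = J i ∧ g • I j = J j := by
  constructor
  · intro h i j hij
    obtain ⟨g, hg⟩ := h ![i, j] (Fin.strictMono_iff_lt_succ.mpr fun k => by
      fin_cases k; exact hij)
    exact ⟨g, hg 0, hg 1⟩
  · intro h k hk
    obtain ⟨g, hg₀, hg₁⟩ := h (k 0) (k 1) (hk Fin.zero_lt_one)
    exact ⟨g, Fin.forall_fin_two.mpr ⟨hg₀, hg₁⟩⟩

lemma related_self_iff {n : ℕ} {I J : Fin n → Ω} :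
    Related G n I J ↔ ∃ g : G, ∀ i, g • I i = J i :=
  ⟨fun h => h id strictMono_id, fun ⟨g, hg⟩ _ _ => ⟨g, fun _ => hg _⟩⟩

lemma Related.comp {m n r : ℕ} {I J : Fin n → Ω} (h : Related G r I J) {e : Fin m → Fin n}
    (he : StrictMono e) : Related G r (I ∘ e) (J ∘ e) :=
  fun k hk => h (e ∘ k) (he.comp hk)

variable (G Ω) in
def StabilizersTI : Prop :=
  ∀ α β : Ω, stabilizer G α ≠ stabilizer G β → stabilizer G α ⊓ stabilizer G β = ⊥

variable (G Ω) in
def StabilizerProductsTrivial : Prop :=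
  ∀ α β γ : Ω, stabilizer G α ≠ stabilizer G β → stabilizer G α ≠ stabilizer G γ →
    stabilizer G β ≠ stabilizer G γ →
    (stabilizer G α : Set G) ∩ (stabilizer G β * stabilizer G γ) = {1}

lemma eq_of_smul_eq_of_mem_stabilizer (hTI : StabilizersTI G Ω)
    (hprod : StabilizerProductsTrivial G Ω) {ω₁ ω₂ α β : Ω}
    (hne : stabilizer G ω₁ ≠ stabilizer G ω₂) {g₁ g₂ : G} (hg₁ : g₁ ∈ stabilizer G ω₁)
    (hg₂ : g₂ ∈ stabilizer G ω₂) (h₁ : g₁ • α = β) (h₂ : g₂ • α = β) : α = β := by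
  have of_mem_stabilizer {g : G} (hg : g ∈ stabilizer G β) (h : g • α = β) : α = β :=
    smul_left_cancel g (h.trans (mem_stabilizer_iff.mp hg).symm)
  by_cases h₁β : stabilizer G β = stabilizer G ω₁
  · exact of_mem_stabilizer (h₁β ▸ hg₁) h₁
  by_cases h₂β : stabilizer G β = stabilizer G ω₂
  · exact of_mem_stabilizer (h₂β ▸ hg₂) h₂
  have hmem : g₁ * g₂⁻¹ ∈ (stabilizer G β : Set G) ∩ (stabilizer G ω₁ * stabilizer G ω₂) := by
    refine ⟨?_, Set.mul_mem_mul hg₁ (inv_mem hg₂)⟩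
    rw [SetLike.mem_coe, mem_stabilizer_iff, mul_smul, inv_smul_eq_iff.mpr h₂.symm, h₁]
  rw [hprod β ω₁ ω₂ h₁β h₂β hne, Set.mem_singleton_iff, mul_inv_eq_one] at hmem
  have hg₁' : g₁ ∈ stabilizer G ω₁ ⊓ stabilizer G ω₂ := ⟨hg₁, hmem ▸ hg₂⟩
  rw [hTI ω₁ ω₂ hne, Subgroup.mem_bot] at hg₁'
  rwa [hg₁', one_smul] at h₁

lemma exists_smul_eq_of_forall_exists_smul_eq {ι : Type*} (hTI : StabilizersTI G Ω)
    (hprod : StabilizerProductsTrivial G Ω) (ω : ι → Ω) (i₀ : ι) {α β : Ω}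
    (h : ∀ i, ∃ g : G, g • ω i = ω i ∧ g • α = β) :
    ∃ g : G, (∀ i, g • ω i = ω i) ∧ g • α = β := by
  choose g hfix hmove using h
  by_cases hall : ∀ i, stabilizer G (ω i) = stabilizer G (ω i₀)
  · refine ⟨g i₀, fun i => ?_, hmove i₀⟩
    rw [← mem_stabilizer_iff, hall i]
    exact hfix i₀
  · obtain ⟨i, hi⟩ := not_forall.mp hall
    have hαβ := eq_of_smul_eq_of_mem_stabilizer hTI hprod hi (hfix i) (hfix i₀) (hmove i)
      (hmove i₀)
    exact ⟨1, fun _ => one_smul G _, by rw [one_smul, hαβ]⟩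

lemma exists_smul_eq_of_related_two (hTI : StabilizersTI G Ω)
    (hprod : StabilizerProductsTrivial G Ω) :
    ∀ (m : ℕ) (I J : Fin (m + 2) → Ω), Related G 2 I J → ∃ g : G, ∀ i, g • I i = J i
  | 0, _, _, h => related_self_iff.mp h
  | m + 1, I, J, h => by
    obtain ⟨a, ha⟩ := exists_smul_eq_of_related_two hTI hprod m _ _
      (h.comp Fin.strictMono_castSucc)
    have hpair (k : Fin (m + 2)) : ∃ g : G, g • I k.castSucc = I k.castSucc ∧
        g • I (Fin.last _) = a⁻¹ • J (Fin.last _) := by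
      obtain ⟨g, hk, hlast⟩ := related_two_iff.mp h _ _ (Fin.castSucc_lt_last k)
      refine ⟨a⁻¹ * g, ?_, by rw [mul_smul, hlast]⟩
      rw [mul_smul, hk, inv_smul_eq_iff]
      exact (ha k).symm
    obtain ⟨b, hfix, hlast⟩ :=
      exists_smul_eq_of_forall_exists_smul_eq hTI hprod _ 0 hpair
    refine ⟨a * b, Fin.lastCases ?_ fun k => ?_⟩
    · rw [mul_smul, hlast, smul_inv_smul]
    · rw [mul_smul, hfix k]
      exact ha k

theorem isBinary_of_stabilizerProductsTrivial (hTI : StabilizersTI G Ω)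
    (hprod : StabilizerProductsTrivial G Ω) : IsBinary G Ω := by
  intro n hn I J h
  obtain ⟨m, rfl⟩ := Nat.exists_eq_add_of_le' hn
  exact related_self_iff.mpr (exists_smul_eq_of_related_two hTI hprod m I J h)

lemma IsBinary.stabilizerProductsTrivial (hTI : StabilizersTI G Ω) (hb : IsBinary G Ω) :
    StabilizerProductsTrivial G Ω := by
  intro α β γ hαβ hαγ hβγ
  refine Set.eq_singleton_iff_unique_mem.mpr
    ⟨⟨one_mem _, 1, one_mem _, 1, one_mem _, mul_one 1⟩, ?_⟩
  rintro _ ⟨hx, y, hy, z, hz, rfl⟩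
  -- `(α, β, γ)` and `(α, β, y • γ)` are pairwise related via `1`, `y * z` and `y`.
  have hrel : Related G 2 ![α, β, γ] ![α, β, y • γ] := by
    refine related_two_iff.mpr fun i j hij => ?_
    fin_cases i <;> fin_cases j <;> try exact absurd hij (by decide)
    · exact ⟨1, by simp⟩
    · exact ⟨y * z, by simpa [mul_smul, mem_stabilizer_iff.mp hz] using mem_stabilizer_iff.mp hx⟩
    · exact ⟨y, by simpa using mem_stabilizer_iff.mp hy⟩
  obtain ⟨g, hg⟩ := related_self_iff.mp (hb 3 (by norm_num) _ _ hrel)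
  have hg₁ : g ∈ stabilizer G α ⊓ stabilizer G β := ⟨hg 0, hg 1⟩
  rw [hTI α β hαβ, Subgroup.mem_bot] at hg₁
  have hy₁ : y ∈ stabilizer G β ⊓ stabilizer G γ := by
    refine ⟨hy, (mem_stabilizer_iff.mpr ?_)⟩
    simpa [hg₁] using (hg 2).symm
  rw [hTI β γ hβγ, Subgroup.mem_bot] at hy₁
  subst hy₁
  have hz₁ : z ∈ stabilizer G α ⊓ stabilizer G γ := ⟨by simpa using hx, hz⟩
  rw [hTI α γ hαγ, Subgroup.mem_bot] at hz₁
  rw [hz₁]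
  exact mul_one 1

theorem isBinary_iff_stabilizerProductsTrivial (hTI : StabilizersTI G Ω) :
    IsBinary G Ω ↔ StabilizerProductsTrivial G Ω :=
  ⟨IsBinary.stabilizerProductsTrivial hTI, isBinary_of_stabilizerProductsTrivial hTI⟩

end Action

section Quotient

variable {G : Type*} [Group G] {H : Subgroup G}

lemma stabilizer_quotient_mk (g : G) :
    stabilizer G (g : G ⧸ H) = H.map (MulAut.conj g).toMonoidHom := by
  rw [← mul_one g, ← smul_eq_mul, ← MulAction.Quotient.smul_mk,
    stabilizer_smul_eq_stabilizer_map_conj, stabilizer_quotient, smul_eq_mul, mul_one]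

lemma stabilizersTI_quotient
    (hTI : ∀ g : G, H ⊓ H.map (MulAut.conj g).toMonoidHom = H ∨
      H ⊓ H.map (MulAut.conj g).toMonoidHom = ⊥) :
    StabilizersTI G (G ⧸ H) := by
  intro α β
  induction α using QuotientGroup.induction_on
  induction β using QuotientGroup.induction_on
  simp only [stabilizer_quotient_mk]
  exact Subgroup.map_conj_inf_map_conj_eq_bot hTI

end Quotient

open Pointwise in
theorem stmt17_general {G : Type*} [Group G] (H : Subgroup G)
    (hTI : ∀ g : G, H ⊓ H.map (MulAut.conj g).toMonoidHom = H ∨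
      H ⊓ H.map (MulAut.conj g).toMonoidHom = ⊥) :
    IsBinary G (G ⧸ H) ↔
      ∀ g₁ g₂ g₃ : G,
        H.map (MulAut.conj g₁).toMonoidHom ≠ H.map (MulAut.conj g₂).toMonoidHom →
        H.map (MulAut.conj g₁).toMonoidHom ≠ H.map (MulAut.conj g₃).toMonoidHom →
        H.map (MulAut.conj g₂).toMonoidHom ≠ H.map (MulAut.conj g₃).toMonoidHom →
        (H.map (MulAut.conj g₁).toMonoidHom : Set G)
          ∩ ((H.map (MulAut.conj g₂).toMonoidHom : Set G)
              * (H.map (MulAut.conj g₃).toMonoidHom : Set G)) = {1} := by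
  rw [isBinary_iff_stabilizerProductsTrivial (stabilizersTI_quotient hTI),
    StabilizerProductsTrivial]
  simp only [QuotientGroup.mk_surjective.forall, stabilizer_quotient_mk]

open Pointwise in
theorem stmt17 {G : Type*} [Group G] [Fintype G] (H : Subgroup G)
    (hTI : ∀ g : G, H ⊓ H.map (MulAut.conj g).toMonoidHom = H ∨
      H ⊓ H.map (MulAut.conj g).toMonoidHom = ⊥) :
    IsBinary G (G ⧸ H) ↔
      ∀ g₁ g₂ g₃ : G,
        H.map (MulAut.conj g₁).toMonoidHom ≠ H.map (MulAut.conj g₂).toMonoidHom →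
        H.map (MulAut.conj g₁).toMonoidHom ≠ H.map (MulAut.conj g₃).toMonoidHom →
        H.map (MulAut.conj g₂).toMonoidHom ≠ H.map (MulAut.conj g₃).toMonoidHom →
        (H.map (MulAut.conj g₁).toMonoidHom : Set G)
          ∩ ((H.map (MulAut.conj g₂).toMonoidHom : Set G)
              * (H.map (MulAut.conj g₃).toMonoidHom : Set G)) = {1} :=
  stmt17_general H hTI
end
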